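/- arXiv:2412.03479 — 3 statements merged into one kernel-verified Lean document; each statement's English description precedes it below -/
import Mathlib

section
/- The Euclidean distance in ℝ³ between the segment from (0,0,0) to (1,2,2) and the segment from (2,1,2) to (0,2,1) equals 1/(5√2). -/
/-!
The vector `n = (-4, -3, 5)` is the cross product of the directions `(1, 2, 2)` and `(-2, 1, -1)`
of the two segments, so `⟪n, x - y⟫ = ⟪n, (0, 0, 0) - (2, 1, 2)⟫ = 1` for all `x`, `y` on them, and
Cauchy–Schwarz gives `dist x y ≥ 1 / ‖n‖ = 1 / (5√2)`. Equality holds at the feet of the common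
perpendicular, which lie inside both segments.
-/

/-- The infimum of Euclidean distances between points of two sets. -/
noncomputable def setDist {E : Type*} [PseudoMetricSpace E] (P Q : Set E) : ℝ :=
  sInf (Set.image2 dist P Q)

open RealInnerProductSpace

section
variable {E : Type*} [SeminormedAddCommGroup E] [InnerProductSpace ℝ E]

theorem inner_eq_of_mem_segment {a b x n : E} (hab : ⟪n, a⟫ = ⟪n, b⟫)
    (hx : x ∈ segment ℝ a b) : ⟪n, x⟫ = ⟪n, a⟫ :=
  (convex_hyperplane (innerₛₗ ℝ n).isLinear ⟪n, a⟫).segment_subset rfl hab.symm hx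

theorem abs_inner_sub_div_norm_le_dist {a b c d x y n : E} (hab : ⟪n, a⟫ = ⟪n, b⟫)
    (hcd : ⟪n, c⟫ = ⟪n, d⟫) (hx : x ∈ segment ℝ a b) (hy : y ∈ segment ℝ c d) :
    |⟪n, a - c⟫| / ‖n‖ ≤ dist x y := by
  have hxy : ⟪n, a - c⟫ = ⟪n, x - y⟫ := by
    rw [inner_sub_right, inner_sub_right, inner_eq_of_mem_segment hab hx,
      inner_eq_of_mem_segment hcd hy]
  rw [hxy, dist_eq_norm]
  exact div_le_of_le_mul₀ (norm_nonneg _) (norm_nonneg _)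
    ((abs_real_inner_le_norm _ _).trans_eq (mul_comm _ _))

end

theorem EuclideanSpace.inner_vec3 (a b c d e f : ℝ) :
    ⟪!₂[a, b, c], !₂[d, e, f]⟫ = a * d + b * e + c * f := by
  simp [PiLp.inner_apply, Fin.sum_univ_three, mul_comm]

theorem EuclideanSpace.norm_vec3 (a b c : ℝ) : ‖!₂[a, b, c]‖ = √(a ^ 2 + b ^ 2 + c ^ 2) := by
  simp [EuclideanSpace.norm_eq, Fin.sum_univ_three]

theorem stmt_14 :
    setDist (segment ℝ ((WithLp.equiv 2 (Fin 3 → ℝ)).symm ![0, 0, 0]) ((WithLp.equiv 2 (Fin 3 → ℝ)).symm ![1, 2, 2]))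
        (segment ℝ ((WithLp.equiv 2 (Fin 3 → ℝ)).symm ![2, 1, 2]) ((WithLp.equiv 2 (Fin 3 → ℝ)).symm ![0, 2, 1])) =
      1 / (5 * Real.sqrt 2) := by
  set n : EuclideanSpace ℝ (Fin 3) := !₂[-4, -3, 5]
  have hn : ‖n‖ = 5 * √2 := by
    rw [EuclideanSpace.norm_vec3, show (-4 : ℝ) ^ 2 + (-3) ^ 2 + 5 ^ 2 = 5 ^ 2 * 2 by norm_num,
      Real.sqrt_mul' _ zero_le_two, Real.sqrt_sq (by norm_num)]
  apply IsLeast.csInf_eq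
  -- the feet of the common perpendicular, at parameters 19/25 and 29/50; their difference is n/50
  refine ⟨⟨!₂[19 / 25, 38 / 25, 38 / 25], ⟨6 / 25, 19 / 25, ?_⟩,
    !₂[21 / 25, 79 / 50, 71 / 50], ⟨21 / 50, 29 / 50, ?_⟩, ?_⟩, ?_⟩
  · norm_num [← WithLp.toLp_smul, ← WithLp.toLp_add]
  · norm_num [← WithLp.toLp_smul, ← WithLp.toLp_add]
  · have hxy : !₂[19 / 25, 38 / 25, 38 / 25] - !₂[21 / 25, 79 / 50, 71 / 50] = (1 / 50 : ℝ) • n := by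
      ext i
      fin_cases i <;> norm_num [n]
    rw [dist_eq_norm, hxy, norm_smul, hn]
    field_simp
    norm_num
  · rintro _ ⟨x, hx, y, hy, rfl⟩
    have hac : ⟪n, !₂[0, 0, 0] - !₂[2, 1, 2]⟫ = 1 := by
      rw [inner_sub_right, EuclideanSpace.inner_vec3, EuclideanSpace.inner_vec3]
      norm_num
    have hlower := abs_inner_sub_div_norm_le_dist (n := n)
      (by norm_num [n, EuclideanSpace.inner_vec3]) (by norm_num [n, EuclideanSpace.inner_vec3]) hx hy
    rwa [WithLp.equiv_symm_apply, hac, hn, abs_one] at hlower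
end

section
/- The Euclidean distance in ℝ⁵ between the segment from (0,0,0,0,0) to (1,1,1,1,1) and the tetrahedron with vertices (1,1,0,0,0), (0,1,0,1,1), (0,0,1,0,1), (0,0,1,1,0) equals 1/√58. -/
noncomputable section StmtAux
open scoped RealInnerProductSpace

private abbrev E5 := EuclideanSpace ℝ (Fin 5)
private def pt (f : Fin 5 → ℝ) : E5 := (WithLp.equiv 2 (Fin 5 → ℝ)).symm f
private def nn : E5 := pt ![-4, 5, 3, -2, -2]

private lemma pstar_mem :
    pt ![25/58,25/58,25/58,25/58,25/58] ∈ segment ℝ (pt ![0,0,0,0,0]) (pt ![1,1,1,1,1]) := by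
  refine ⟨33/58, 25/58, by norm_num, by norm_num, by norm_num, ?_⟩
  ext i
  fin_cases i <;> simp [pt] <;> norm_num

private lemma qstar_mem :
    pt ![21/58,30/58,28/58,23/58,23/58] ∈
      convexHull ℝ {pt ![1,1,0,0,0], pt ![0,1,0,1,1], pt ![0,0,1,0,1], pt ![0,0,1,1,0]} := by
  have hc := convex_convexHull ℝ
    ({pt ![1,1,0,0,0], pt ![0,1,0,1,1], pt ![0,0,1,0,1], pt ![0,0,1,1,0]} : Set E5)
  have h := hc.sum_mem (t := Finset.univ) (w := ![21/58, 9/58, 14/58, 14/58])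
    (z := ![pt ![1,1,0,0,0], pt ![0,1,0,1,1], pt ![0,0,1,0,1], pt ![0,0,1,1,0]])
    (by intro i _; fin_cases i <;> norm_num)
    (by simp [Fin.sum_univ_four]; norm_num)
    (by intro i _; fin_cases i <;> exact subset_convexHull ℝ _ (by simp))
  convert h using 1
  rw [Fin.sum_univ_four]
  ext i
  fin_cases i <;> simp [pt] <;> norm_num

private lemma dist_star :
    dist (pt ![25/58,25/58,25/58,25/58,25/58]) (pt ![21/58,30/58,28/58,23/58,23/58])
      = 1 / Real.sqrt 58 := by
  rw [EuclideanSpace.dist_eq, show (1:ℝ)/Real.sqrt 58 = Real.sqrt (1/58) by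
    rw [one_div, ← Real.sqrt_inv, one_div]]
  congr 1
  simp [pt, Fin.sum_univ_five, Real.dist_eq, ← sq_abs (α := ℝ)]
  norm_num

private lemma lower_bd (p q : E5)
    (hp : p ∈ segment ℝ (pt ![0,0,0,0,0]) (pt ![1,1,1,1,1]))
    (hq : q ∈ convexHull ℝ {pt ![1,1,0,0,0], pt ![0,1,0,1,1], pt ![0,0,1,0,1], pt ![0,0,1,1,0]}) :
    1 / Real.sqrt 58 ≤ dist p q := by
  have hnp : ⟪nn, p⟫ = 0 := by
    obtain ⟨a, b, ha, hb, hab, rfl⟩ := hp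
    simp [nn, pt, PiLp.inner_apply, RCLike.inner_apply, Fin.sum_univ_five]
    ring
  have hnq : ⟪nn, q⟫ = 1 := by
    have hsub : ({pt ![1,1,0,0,0], pt ![0,1,0,1,1], pt ![0,0,1,0,1], pt ![0,0,1,1,0]} : Set E5)
        ⊆ {x | ⟪nn, x⟫ = 1} := by
      intro x hx
      simp only [Set.mem_insert_iff, Set.mem_singleton_iff] at hx
      rcases hx with rfl | rfl | rfl | rfl <;>
        · simp [nn, pt, PiLp.inner_apply, RCLike.inner_apply, Fin.sum_univ_five]
          norm_num
    have hconv : Convex ℝ {x : E5 | ⟪nn, x⟫ = 1} := by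
      intro x hx y hy a b ha hb hab
      simp only [Set.mem_setOf_eq] at *
      rw [inner_add_right, inner_smul_right, inner_smul_right, hx, hy]
      simpa using hab
    exact convexHull_min hsub hconv hq
  have key : (1:ℝ) ≤ Real.sqrt 58 * dist p q := by
    have h1 : ⟪nn, q - p⟫ ≤ ‖nn‖ * ‖q - p‖ := real_inner_le_norm nn (q - p)
    rw [inner_sub_right, hnp, hnq, sub_zero] at h1
    have hn : ‖nn‖ = Real.sqrt 58 := by
      rw [EuclideanSpace.norm_eq]
      congr 1
      simp [nn, pt, Fin.sum_univ_five]
      norm_num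
    rwa [hn, ← dist_eq_norm, dist_comm q p] at h1
  rw [div_le_iff₀ (by positivity)]
  linarith [key]

end StmtAux

theorem stmt_17 :
    setDist
        (segment ℝ ((WithLp.equiv 2 (Fin 5 → ℝ)).symm ![0, 0, 0, 0, 0])
          ((WithLp.equiv 2 (Fin 5 → ℝ)).symm ![1, 1, 1, 1, 1]))
        (convexHull ℝ {(WithLp.equiv 2 (Fin 5 → ℝ)).symm ![1, 1, 0, 0, 0],
          (WithLp.equiv 2 (Fin 5 → ℝ)).symm ![0, 1, 0, 1, 1],
          (WithLp.equiv 2 (Fin 5 → ℝ)).symm ![0, 0, 1, 0, 1],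
          (WithLp.equiv 2 (Fin 5 → ℝ)).symm ![0, 0, 1, 1, 0]}) =
      1 / Real.sqrt 58 := by
  show setDist (segment ℝ (pt ![0,0,0,0,0]) (pt ![1,1,1,1,1]))
      (convexHull ℝ {pt ![1,1,0,0,0], pt ![0,1,0,1,1], pt ![0,0,1,0,1], pt ![0,0,1,1,0]})
      = 1 / Real.sqrt 58
  unfold setDist
  apply le_antisymm
  · apply csInf_le
    · exact ⟨0, by rintro x ⟨p, hp, q, hq, rfl⟩; exact dist_nonneg⟩
    · exact ⟨_, pstar_mem, _, qstar_mem, dist_star⟩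
  · apply le_csInf
    · exact ⟨_, ⟨_, pstar_mem, _, qstar_mem, rfl⟩⟩
    · rintro x ⟨p, hp, q, hq, rfl⟩
      exact lower_bd p q hp hq
end

section
/- The Euclidean distance in ℝ⁶ between the segment from the origin to (1,1,1,1,1,1) and the 5-dimensional simplex with vertices (1,0,1,1,0,0), (1,0,0,0,1,1), (0,1,1,0,1,1), (0,1,0,1,0,1), (0,1,0,1,1,0) equals 1/√202. -/
open WithLp
open scoped InnerProductSpace

lemma setDist_eq_of_forall_le_of_dist_eq {E : Type*} [PseudoMetricSpace E] {P Q : Set E}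
    {p q : E} {d : ℝ} (hle : ∀ x ∈ P, ∀ y ∈ Q, d ≤ dist x y) (hp : p ∈ P) (hq : q ∈ Q)
    (hpq : dist p q = d) : setDist P Q = d :=
  IsLeast.csInf_eq ⟨hpq ▸ Set.mem_image2_of_mem hp hq, by
    rintro _ ⟨x, hx, y, hy, rfl⟩
    exact hle x hx y hy⟩

section InnerSeparation

variable {E : Type*} [NormedAddCommGroup E] [InnerProductSpace ℝ E]

lemma inner_eq_of_mem_convexHull {s : Set E} {w : E} {a : ℝ} (hs : ∀ x ∈ s, ⟪w, x⟫_ℝ = a)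
    {x : E} (hx : x ∈ convexHull ℝ s) : ⟪w, x⟫_ℝ = a :=
  convexHull_min hs (convex_hyperplane (innerₗ E w).isLinear a) hx

lemma abs_sub_div_norm_le_dist {w p q : E} {a b : ℝ} (hp : ⟪w, p⟫_ℝ = a) (hq : ⟪w, q⟫_ℝ = b) :
    |b - a| / ‖w‖ ≤ dist p q := by
  refine div_le_of_le_mul₀ (norm_nonneg w) dist_nonneg ?_
  calc |b - a| = |⟪w, q - p⟫_ℝ| := by rw [inner_sub_right, hp, hq]
    _ ≤ ‖w‖ * ‖q - p‖ := abs_real_inner_le_norm w (q - p)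
    _ = dist p q * ‖w‖ := by rw [dist_comm, dist_eq_norm, mul_comm]

lemma dist_self_add_div_norm_sq_smul (p w : E) (c : ℝ) :
    dist p (p + (c / ‖w‖ ^ 2) • w) = |c| / ‖w‖ := by
  rcases eq_or_ne w 0 with rfl | hw
  · simp
  rw [dist_self_add_right, norm_smul, Real.norm_eq_abs, abs_div, abs_of_nonneg (sq_nonneg ‖w‖)]
  field_simp

theorem setDist_convexHull_eq_of_inner_eq {s t : Set E} {w p : E} {a b : ℝ}
    (hs : ∀ x ∈ s, ⟪w, x⟫_ℝ = a) (ht : ∀ y ∈ t, ⟪w, y⟫_ℝ = b)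
    (hp : p ∈ convexHull ℝ s) (hq : p + ((b - a) / ‖w‖ ^ 2) • w ∈ convexHull ℝ t) :
    setDist (convexHull ℝ s) (convexHull ℝ t) = |b - a| / ‖w‖ :=
  setDist_eq_of_forall_le_of_dist_eq
    (fun _ hx _ hy => abs_sub_div_norm_le_dist (inner_eq_of_mem_convexHull hs hx)
      (inner_eq_of_mem_convexHull ht hy))
    hp hq (dist_self_add_div_norm_sq_smul p w (b - a))

end InnerSeparation

theorem stmt_18 :
    setDist
        (segment ℝ ((WithLp.equiv 2 (Fin 6 → ℝ)).symm ![0, 0, 0, 0, 0, 0])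
          ((WithLp.equiv 2 (Fin 6 → ℝ)).symm ![1, 1, 1, 1, 1, 1]))
        (convexHull ℝ {(WithLp.equiv 2 (Fin 6 → ℝ)).symm ![1, 0, 1, 1, 0, 0],
          (WithLp.equiv 2 (Fin 6 → ℝ)).symm ![1, 0, 0, 0, 1, 1],
          (WithLp.equiv 2 (Fin 6 → ℝ)).symm ![0, 1, 1, 0, 1, 1],
          (WithLp.equiv 2 (Fin 6 → ℝ)).symm ![0, 1, 0, 1, 0, 1],
          (WithLp.equiv 2 (Fin 6 → ℝ)).symm ![0, 1, 0, 1, 1, 0]}) =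
      1 / Real.sqrt 202 := by
  simp only [WithLp.equiv_symm_apply]
  rw [← convexHull_pair]
  set w : EuclideanSpace ℝ (Fin 6) := !₂[-7, -9, 2, 6, 4, 4]
  have hw : ‖w‖ = √202 := by
    norm_num [w, EuclideanSpace.norm_eq, Fin.sum_univ_succ]
  rw [show 1 / √202 = |1 - 0| / ‖w‖ by rw [hw]; norm_num]
  refine setDist_convexHull_eq_of_inner_eq (p := toLp 2 fun _ => 109 / 202) ?_ ?_ ?_ ?_
  · rintro x (rfl | rfl) <;>
      norm_num [w, EuclideanSpace.inner_toLp_toLp, dotProduct, Fin.sum_univ_succ]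
  · rintro x (rfl | rfl | rfl | rfl | rfl) <;>
      norm_num [w, EuclideanSpace.inner_toLp_toLp, dotProduct, Fin.sum_univ_succ]
  · rw [convexHull_pair]
    refine ⟨93 / 202, 109 / 202, by norm_num, by norm_num, by norm_num, ?_⟩
    ext i
    fin_cases i <;> norm_num
  · have hcomb : toLp 2 (fun _ => 109 / 202) + ((1 - 0) / ‖w‖ ^ 2) • w =
        ∑ i, ![(63 / 202 : ℝ), 39 / 202, 48 / 202, 26 / 202, 26 / 202] i •
          ![!₂[1, 0, 1, 1, 0, 0], !₂[1, 0, 0, 0, 1, 1], !₂[0, 1, 1, 0, 1, 1],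
            !₂[0, 1, 0, 1, 0, 1], !₂[0, 1, 0, 1, 1, 0]] i := by
      rw [hw, Real.sq_sqrt (by norm_num)]
      ext i
      fin_cases i <;> norm_num [w, Fin.sum_univ_succ]
    rw [hcomb]
    refine (convex_convexHull ℝ _).sum_mem (fun i _ => ?_) ?_
      (fun i _ => subset_convexHull ℝ _ ?_)
    · fin_cases i <;> norm_num
    · norm_num [Fin.sum_univ_succ]
    · fin_cases i <;> simp
end
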